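/- Let an admissible chain-partition datum for e_1,…,e_M be given with β̂ ≠ 0, and set β = β̂/‖β̂‖². Let t = |J|, let φ : J → {1,…,t} be the unique bijection taking the Hebrew lexicographic order on J to the standard order on {1,…,t}, and define δ : {1,…,t} → {1,…,t} by letting δ(φ(h,m)) be the number of elements (h',m') ∈ J with m' < m + 1, or m' = m + 1 and h' < h. Then for k_1, k_2 ∈ {1,…,t}, i ∈ Δ_{φ^{−1}(k_1)} and j ∈ Δ_{φ^{−1}(k_2)}, one has ⟪β, e_i − e_j⟫ ≥ ‖β‖² if and only if k_2 > δ(k_1). -/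

import Mathlib

open scoped RealInnerProductSpace BigOperators

/-- A chain-partition datum for the pairwise orthogonal nonzero vectors `e 0, …, e (M-1)`:
a positive integer `L`, functions `l1 l2 : {1,…,L} → ℤ` with `l1 h ≤ l2 h`, and pairwise
disjoint nonempty subsets `Δ h m ⊆ {1,…,M}` for `(h,m)` in the index set
`J = {(h,m) : 1 ≤ h ≤ L, l1 h ≤ m ≤ l2 h}` whose union is `{1,…,M}`. -/
structure ChainPartitionDatum (M : ℕ) (V : Type*) [NormedAddCommGroup V]
    [InnerProductSpace ℝ V] (e : Fin M → V) where
  L : ℕ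
  Lpos : 0 < L
  l1 : Fin L → ℤ
  l2 : Fin L → ℤ
  l1_le_l2 : ∀ h, l1 h ≤ l2 h
  Δ : Fin L → ℤ → Finset (Fin M)
  Δ_nonempty : ∀ h m, l1 h ≤ m → m ≤ l2 h → (Δ h m).Nonempty
  Δ_disjoint : ∀ h m h' m', l1 h ≤ m → m ≤ l2 h → l1 h' ≤ m' → m' ≤ l2 h' →
    (h, m) ≠ (h', m') → Disjoint (Δ h m) (Δ h' m')
  Δ_union : ∀ i : Fin M, ∃ h m, l1 h ≤ m ∧ m ≤ l2 h ∧ i ∈ Δ h m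

namespace ChainPartitionDatum

variable {V : Type*} [NormedAddCommGroup V] [InnerProductSpace ℝ V]
variable {M : ℕ} {e : Fin M → V}

/-- `r h m = Σ_{j ∈ Δ_{h,m}} ‖e_j‖⁻²`. -/
noncomputable def r (D : ChainPartitionDatum M V e) (h : Fin D.L) (m : ℤ) : ℝ :=
  ∑ j ∈ D.Δ h m, (‖e j‖ ^ 2)⁻¹

/-- `ε h = (Σ_{m=l1 h}^{l2 h} m·r_{h,m}) / (Σ_{m=l1 h}^{l2 h} r_{h,m})`. -/
noncomputable def eps (D : ChainPartitionDatum M V e) (h : Fin D.L) : ℝ :=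
  (∑ m ∈ Finset.Icc (D.l1 h) (D.l2 h), (m : ℝ) * D.r h m) /
    ∑ m ∈ Finset.Icc (D.l1 h) (D.l2 h), D.r h m

/-- Admissibility: `−1/2 ≤ ε(h) < 1/2` for all `h` and `ε(1) > ε(2) > … > ε(L)`. -/
def Admissible (D : ChainPartitionDatum M V e) : Prop :=
  (∀ h, -(1 / 2 : ℝ) ≤ D.eps h ∧ D.eps h < 1 / 2) ∧ StrictAnti D.eps

/-- `β̂ = Σ_{h=1}^{L} Σ_{m=l1 h}^{l2 h} Σ_{j ∈ Δ_{h,m}} (ε(h) − m)·e_j/‖e_j‖²`. -/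
noncomputable def betaHat (D : ChainPartitionDatum M V e) : V :=
  ∑ h : Fin D.L, ∑ m ∈ Finset.Icc (D.l1 h) (D.l2 h), ∑ j ∈ D.Δ h m,
    ((D.eps h - (m : ℝ)) / ‖e j‖ ^ 2) • e j

end ChainPartitionDatum

/-!
For `i ∈ Δ_{h,m}`, orthogonality gives `⟪β̂, e_i⟫ = ε(h) − m`, and `⟪β, x⟫ ≥ ‖β‖²` amounts to
`⟪β̂, x⟫ ≥ 1`. As every `ε(h)` lies in `[−1/2, 1/2)`, for `i ∈ Δ_p` and `j ∈ Δ_q` the inequality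
`(ε(p₁) − p₂) − (ε(q₁) − q₂) ≥ 1` holds exactly when `q₂ ≥ p₂ + 2`, or `q₂ = p₂ + 1` and
`ε(p₁) ≥ ε(q₁)`, i.e. `p₁ ≤ q₁`; that is, when `(p₁, p₂ + 1) ≼ q` in the Hebrew order, which is the
lexicographic order of `toLex x.swap`. On the other side `φ(q)` counts the elements of `J` that
are `≼ q` and `δ(φ(p))` those strictly below `(p₁, p₂ + 1)`, and the first count exceeds the
second exactly when `(p₁, p₂ + 1) ≼ q`.
-/

open Finset

section

variable {ι V : Type*} [NormedAddCommGroup V] [InnerProductSpace ℝ V]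

lemma real_inner_smul_inv_normSq_ge_iff {v : V} (hv : v ≠ 0) (x : V) :
    ⟪(‖v‖ ^ 2)⁻¹ • v, x⟫ ≥ ‖(‖v‖ ^ 2)⁻¹ • v‖ ^ 2 ↔ 1 ≤ ⟪v, x⟫ := by
  have hpos : 0 < ‖v‖ ^ 2 := by positivity
  have hnorm : ‖(‖v‖ ^ 2)⁻¹ • v‖ ^ 2 = (‖v‖ ^ 2)⁻¹ := by
    rw [norm_smul, mul_pow, norm_inv, norm_pow, norm_norm]
    field_simp
  rw [real_inner_smul_left, hnorm, ge_iff_le, le_mul_iff_one_le_right (inv_pos.2 hpos)]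

lemma inner_sum_smul_div_normSq [DecidableEq ι] {e : ι → V} (he : ∀ i, e i ≠ 0)
    (horth : Pairwise fun i j => ⟪e i, e j⟫ = 0) (s : Finset ι) (c : ℝ) (i : ι) :
    ⟪∑ j ∈ s, (c / ‖e j‖ ^ 2) • e j, e i⟫ = if i ∈ s then c else 0 := by
  have hterm (j : ι) : ⟪(c / ‖e j‖ ^ 2) • e j, e i⟫ = if j = i then c else 0 := by
    split_ifs with hji
    · rw [hji, real_inner_smul_left, real_inner_self_eq_norm_sq,
        div_mul_cancel₀ _ (by simpa using he i)]
    · rw [real_inner_smul_left, horth hji, mul_zero]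
  simp_rw [sum_inner, hterm, sum_ite_eq']

end

lemma one_le_sub_sub_iff_toLex_le {ι : Type*} [LinearOrder ι] {f : ι → ℝ} (hf : StrictAnti f)
    (hbound : ∀ a, -(1 / 2) ≤ f a ∧ f a < 1 / 2) (a b : ι) (m n : ℤ) :
    1 ≤ (f a - m) - (f b - n) ↔ toLex (m + 1, a) ≤ toLex (n, b) := by
  have ha := hbound a
  have hb := hbound b
  rw [Prod.Lex.toLex_le_toLex]
  rcases lt_trichotomy n (m + 1) with hlt | rfl | hgt
  · have : (n : ℝ) ≤ m := by exact_mod_cast Int.lt_add_one_iff.1 hlt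
    exact iff_of_false (by linarith) (by omega)
  · push_cast
    simp only [lt_self_iff_false, true_and, false_or, ← hf.le_iff_ge]
    constructor <;> intro <;> linarith
  · have : (m : ℝ) + 2 ≤ n := by exact_mod_cast (by omega : m + 2 ≤ n)
    exact iff_of_true (by linarith) (Or.inl hgt)

lemma card_filter_univ_subtype {α : Type*} (s : Finset α) (P : α → Prop) [DecidablePred P] :
    #{x : s | P x} = #(s.filter P) := by
  rw [univ_eq_attach, filter_attach, card_map, card_attach]

lemma card_filter_val_le_of_bijective {α : Type*} [Fintype α] {t n : ℕ}
    {φ : α → Icc 1 t} (hφ : Function.Bijective φ) (hn : n ≤ t) :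
    #{x | (φ x : ℕ) ≤ n} = n := by
  rw [card_equiv (Equiv.ofBijective φ hφ) (t := {k : Icc 1 t | (k : ℕ) ≤ n}) (by simp),
    card_filter_univ_subtype (Icc 1 t) (· ≤ n)]
  have : (Icc 1 t).filter (· ≤ n) = Icc 1 n := by
    ext k
    simp only [mem_filter, mem_Icc]
    omega
  rw [this, Nat.card_Icc, Nat.add_sub_cancel]

lemma card_filter_lt_lt_card_filter_le_iff {α β : Type*} [LinearOrder β] {s : Finset α}
    (f : α → β) {q : α} (hq : q ∈ s) (a : β) :
    #(s.filter (f · < a)) < #(s.filter (f · ≤ f q)) ↔ a ≤ f q := by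
  constructor
  · intro hcard
    by_contra! hlt
    refine hcard.not_ge (card_le_card fun x hx => ?_)
    simp only [mem_filter] at hx ⊢
    exact ⟨hx.1, hx.2.trans_lt hlt⟩
  · intro hle
    refine card_lt_card ((ssubset_iff_of_subset fun x hx => ?_).2 ⟨q, ?_, ?_⟩)
    · simp only [mem_filter] at hx ⊢
      exact ⟨hx.1, hx.2.le.trans hle⟩
    · simp [hq]
    · simp [hle]

namespace ChainPartitionDatum

variable {V : Type*} [NormedAddCommGroup V] [InnerProductSpace ℝ V] {M : ℕ} {e : Fin M → V}
  (D : ChainPartitionDatum M V e)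

lemma mem_indexSet_iff {p : Fin D.L × ℤ} :
    p ∈ univ.biUnion (fun h : Fin D.L => (Icc (D.l1 h) (D.l2 h)).image fun m => (h, m)) ↔
      D.l1 p.1 ≤ p.2 ∧ p.2 ≤ D.l2 p.1 := by
  constructor
  · simp only [mem_biUnion, mem_univ, true_and, mem_image, mem_Icc]
    rintro ⟨h, m, hm, rfl⟩
    exact hm
  · intro hp
    exact mem_biUnion.2 ⟨p.1, mem_univ _, mem_image.2 ⟨p.2, mem_Icc.2 hp, rfl⟩⟩

lemma eq_of_mem_Δ {h h' : Fin D.L} {m m' : ℤ} (hm : D.l1 h ≤ m ∧ m ≤ D.l2 h)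
    (hm' : D.l1 h' ≤ m' ∧ m' ≤ D.l2 h') {i : Fin M} (hi : i ∈ D.Δ h m) (hi' : i ∈ D.Δ h' m') :
    (h, m) = (h', m') := by
  by_contra hne
  exact disjoint_left.1 (D.Δ_disjoint h m h' m' hm.1 hm.2 hm'.1 hm'.2 hne) hi hi'

lemma inner_betaHat (he : ∀ i, e i ≠ 0) (horth : Pairwise fun i j => ⟪e i, e j⟫ = 0)
    {h : Fin D.L} {m : ℤ} (hm : D.l1 h ≤ m ∧ m ≤ D.l2 h) {i : Fin M} (hi : i ∈ D.Δ h m) :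
    ⟪D.betaHat, e i⟫ = D.eps h - m := by
  have hother {h' : Fin D.L} {m' : ℤ} (hm' : m' ∈ Icc (D.l1 h') (D.l2 h'))
      (hne : (h', m') ≠ (h, m)) : i ∉ D.Δ h' m' := fun hi' =>
    hne (D.eq_of_mem_Δ (mem_Icc.1 hm') hm hi' hi)
  rw [betaHat, sum_inner, sum_eq_single_of_mem h (mem_univ h), sum_inner,
    sum_eq_single_of_mem m (mem_Icc.2 hm), inner_sum_smul_div_normSq he horth, if_pos hi]
  · intro m' hm' hne
    rw [inner_sum_smul_div_normSq he horth, if_neg (hother hm' (by simp [hne]))]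
  · intro h' _ hne
    rw [sum_inner]
    refine sum_eq_zero fun m' hm' => ?_
    rw [inner_sum_smul_div_normSq he horth, if_neg (hother hm' (by simp [hne]))]

lemma one_le_inner_betaHat_sub_iff (hD : D.Admissible) (he : ∀ i, e i ≠ 0)
    (horth : Pairwise fun i j => ⟪e i, e j⟫ = 0) {p q : Fin D.L × ℤ}
    (hp : D.l1 p.1 ≤ p.2 ∧ p.2 ≤ D.l2 p.1) (hq : D.l1 q.1 ≤ q.2 ∧ q.2 ≤ D.l2 q.1)
    {i j : Fin M} (hi : i ∈ D.Δ p.1 p.2) (hj : j ∈ D.Δ q.1 q.2) :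
    1 ≤ ⟪D.betaHat, e i - e j⟫ ↔ toLex (p.2 + 1, p.1) ≤ toLex q.swap := by
  rw [inner_sub_right, D.inner_betaHat he horth hp hi, D.inner_betaHat he horth hq hj]
  exact one_le_sub_sub_iff_toLex_le hD.2 hD.1 _ _ _ _

end ChainPartitionDatum

theorem inner_sub_ge_iff_delta_lt_general
    {V : Type*} [NormedAddCommGroup V] [InnerProductSpace ℝ V]
    {M : ℕ} (e : Fin M → V) (he : ∀ i, e i ≠ 0)
    (horth : ∀ i j : Fin M, i ≠ j → ⟪e i, e j⟫ = 0)
    (D : ChainPartitionDatum M V e) (hD : D.Admissible)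
    (hne : D.betaHat ≠ 0) (β : V) (hβ : β = (‖D.betaHat‖ ^ 2)⁻¹ • D.betaHat)
    (JF : Finset (Fin D.L × ℤ))
    (hJF : JF = Finset.univ.biUnion fun h : Fin D.L =>
      (Finset.Icc (D.l1 h) (D.l2 h)).image fun m => (h, m))
    (t : ℕ)
    (φ : {p // p ∈ JF} → {k // k ∈ Finset.Icc 1 t})
    (hbij : Function.Bijective φ)
    (hord : ∀ p q : {p // p ∈ JF},
      ((φ p).1 ≤ (φ q).1 ↔ (p.1.2 < q.1.2 ∨ (p.1.2 = q.1.2 ∧ p.1.1 ≤ q.1.1))))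
    (δ : ℕ → ℕ)
    (hδ : ∀ p : {p // p ∈ JF}, δ (φ p).1 =
      (JF.filter fun q => q.2 < p.1.2 + 1 ∨ (q.2 = p.1.2 + 1 ∧ q.1 < p.1.1)).card)
    (p q : Fin D.L × ℤ) (hp : p ∈ JF) (hq : q ∈ JF)
    (i : Fin M) (hi : i ∈ D.Δ p.1 p.2) (j : Fin M) (hj : j ∈ D.Δ q.1 q.2) :
    ⟪β, e i - e j⟫ ≥ ‖β‖ ^ 2 ↔ δ (φ ⟨p, hp⟩).1 < (φ ⟨q, hq⟩).1 := by
  have hφq : (φ ⟨q, hq⟩ : ℕ) = #(JF.filter fun x => toLex x.swap ≤ toLex q.swap) := by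
    rw [← card_filter_univ_subtype,
      ← card_filter_val_le_of_bijective hbij (mem_Icc.1 (φ ⟨q, hq⟩).2).2]
    congr 1
    ext x
    simp [hord, Prod.Lex.toLex_le_toLex]
  have hδp : δ (φ ⟨p, hp⟩) = #(JF.filter fun x => toLex x.swap < toLex (p.2 + 1, p.1)) := by
    simp only [hδ, Prod.Lex.toLex_lt_toLex, Prod.fst_swap, Prod.snd_swap]
  rw [hβ, real_inner_smul_inv_normSq_ge_iff hne,
    D.one_le_inner_betaHat_sub_iff hD he horth
      (D.mem_indexSet_iff.1 (hJF ▸ hp)) (D.mem_indexSet_iff.1 (hJF ▸ hq)) hi hj,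
    hφq, hδp, card_filter_lt_lt_card_filter_le_iff (fun x => toLex x.swap) hq]

/-- For an admissible chain-partition datum with `β̂ ≠ 0`, `β = β̂/‖β̂‖²`,
`φ : J → {1,…,t}` the unique bijection taking the Hebrew lexicographic order on `J` to the
standard order, and `δ` defined by letting `δ(φ(h,m))` be the number of `(h',m') ∈ J` with
`m' < m+1`, or `m' = m+1` and `h' < h`: for `p, q ∈ J`, `i ∈ Δ_p` and `j ∈ Δ_q`, one has
`⟪β, e_i − e_j⟫ ≥ ‖β‖²` if and only if `φ(q) > δ(φ(p))`. -/
theorem inner_sub_ge_iff_delta_lt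
    {V : Type*} [NormedAddCommGroup V] [InnerProductSpace ℝ V]
    {M : ℕ} (hM : 0 < M) (e : Fin M → V) (he : ∀ i, e i ≠ 0)
    (horth : ∀ i j : Fin M, i ≠ j → ⟪e i, e j⟫ = 0)
    (D : ChainPartitionDatum M V e) (hD : D.Admissible)
    (hne : D.betaHat ≠ 0) (β : V) (hβ : β = (‖D.betaHat‖ ^ 2)⁻¹ • D.betaHat)
    (JF : Finset (Fin D.L × ℤ))
    (hJF : JF = Finset.univ.biUnion fun h : Fin D.L =>
      (Finset.Icc (D.l1 h) (D.l2 h)).image fun m => (h, m))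
    (t : ℕ) (ht : t = JF.card)
    (φ : {p // p ∈ JF} → {k // k ∈ Finset.Icc 1 t})
    (hbij : Function.Bijective φ)
    (hord : ∀ p q : {p // p ∈ JF},
      ((φ p).1 ≤ (φ q).1 ↔ (p.1.2 < q.1.2 ∨ (p.1.2 = q.1.2 ∧ p.1.1 ≤ q.1.1))))
    (δ : ℕ → ℕ)
    (hδ : ∀ p : {p // p ∈ JF}, δ (φ p).1 =
      (JF.filter fun q => q.2 < p.1.2 + 1 ∨ (q.2 = p.1.2 + 1 ∧ q.1 < p.1.1)).card)
    (p q : Fin D.L × ℤ) (hp : p ∈ JF) (hq : q ∈ JF)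
    (i : Fin M) (hi : i ∈ D.Δ p.1 p.2) (j : Fin M) (hj : j ∈ D.Δ q.1 q.2) :
    ⟪β, e i - e j⟫ ≥ ‖β‖ ^ 2 ↔ δ (φ ⟨p, hp⟩).1 < (φ ⟨q, hq⟩).1 :=
  inner_sub_ge_iff_delta_lt_general e he horth D hD hne β hβ JF hJF t φ hbij hord δ hδ p q hp hq i
    hi j hj
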